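/- arXiv:2602.20606 — 3 statements merged into one kernel-verified Lean document; each statement's English description precedes it below -/
import Mathlib

section
/- Let W : ℕ → (0,∞) be a strictly increasing function with lim_{N→∞} W(N) = ∞, such that ΔW is decreasing with lim_{N→∞} ΔW(N) = 0 and lim_{N→∞} N·ΔW(N) = ∞. Let (x_n)_{n∈ℕ} be a bounded sequence in a Banach space Y and let L ∈ Y. If the uniform W-weighted average of (x_n) equals L, i.e. 𝔼^W_unif x_n = L, then the Cesàro averages converge to L: lim_{N→∞} (1/N) Σ_{n=1}^N x_n = L. -/
open Filter Finset MeasureTheory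

/-- Discrete derivative: `Δg(n) = g(n) - g(n-1)` for `n ≥ 2`, and `Δg(1) = g(1)`. -/
noncomputable def dd (g : ℕ → ℝ) (n : ℕ) : ℝ := if n = 1 then g 1 else g n - g (n - 1)

/-- Iterated discrete derivative `Δ^k`. -/
noncomputable def ddIter (f : ℕ → ℝ) : ℕ → ℕ → ℝ
  | 0 => f
  | k + 1 => dd (ddIter f k)

/-- `N`-th `W`-weighted average `𝔼^W_{n ≤ N} x_n`. -/
noncomputable def wavg {Y : Type*} [AddCommGroup Y] [Module ℝ Y]
    (W : ℕ → ℝ) (x : ℕ → Y) (N : ℕ) : Y :=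
  (W N)⁻¹ • ∑ n ∈ Finset.Icc 1 N, dd W n • x n

/-- `W`-weighted average over the interval `[M, N]`. -/
noncomputable def wavgI {Y : Type*} [AddCommGroup Y] [Module ℝ Y]
    (W : ℕ → ℝ) (x : ℕ → Y) (M N : ℕ) : Y :=
  (W N - W M)⁻¹ • ∑ n ∈ Finset.Icc M N, dd W n • x n

/-- Cesàro average over the interval `[M, N]`. -/
noncomputable def cesaroI {Y : Type*} [AddCommGroup Y] [Module ℝ Y]
    (x : ℕ → Y) (M N : ℕ) : Y :=
  ((N : ℝ) - (M : ℝ))⁻¹ • ∑ n ∈ Finset.Icc M N, x n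

/-- Iterated `W`-weighted averages: `iterAvg W x k N = 𝔼(k)^W_{n ≤ N} x_n`,
with the convention `iterAvg W x 0 = x`. -/
noncomputable def iterAvg {Y : Type*} [AddCommGroup Y] [Module ℝ Y]
    (W : ℕ → ℝ) (x : ℕ → Y) : ℕ → ℕ → Y
  | 0, N => x N
  | k + 1, N => (W N)⁻¹ • ∑ n ∈ Finset.Icc 1 N, dd W n • iterAvg W x k n

/-- The uniform `W`-weighted average of `x` equals `L`: `𝔼^W_unif x_n = L`. -/
def unifAvg {Y : Type*} [NormedAddCommGroup Y] [NormedSpace ℝ Y]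
    (W : ℕ → ℝ) (x : ℕ → Y) (L : Y) : Prop :=
  ∀ ε > (0 : ℝ), ∃ K > (0 : ℝ), ∀ M N : ℕ, 1 ≤ M → M ≤ N → K ≤ W N - W M →
    ‖wavgI W x M N - L‖ < ε

/-- `𝔼(∞)^W x_n = L`: `lim_{k → ∞} limsup_{N → ∞} ‖𝔼(k)^W_{n ≤ N}(x_n - L)‖ = 0`. -/
def iterInfty {Y : Type*} [NormedAddCommGroup Y] [NormedSpace ℝ Y]
    (W : ℕ → ℝ) (x : ℕ → Y) (L : Y) : Prop :=
  Tendsto (fun k => Filter.limsup (fun N => ‖iterAvg W (fun n => x n - L) (k + 1) N‖) atTop)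
    atTop (nhds 0)

/-- Membership in the class `𝓕₁`. -/
def inF1 (f : ℕ → ℝ) : Prop :=
  Tendsto f atTop atTop ∧ Tendsto (fun n => dd f n) atTop (nhds 0) ∧
    ∃ n₀ : ℕ, ∀ m n : ℕ, n₀ ≤ m → m ≤ n → dd f n ≤ dd f m

/-- `memF ℓ f` means `f ∈ 𝓕_{ℓ+1}`. -/
def memF : ℕ → (ℕ → ℝ) → Prop
  | 0, f => inF1 f
  | ℓ + 1, f => memF ℓ (dd f)

/-- Integer powers `T^m` of an invertible map `T` with inverse `e`. -/
def zpowIter {X : Type*} (T e : X → X) (m : ℤ) : X → X :=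
  if 0 ≤ m then T^[m.toNat] else e^[(-m).toNat]

/-- `p(Δ)f(n)` for an integer polynomial `p`. -/
noncomputable def polyDD (p : Polynomial ℤ) (f : ℕ → ℝ) (n : ℕ) : ℝ :=
  ∑ j ∈ Finset.range (p.natDegree + 1), (p.coeff j : ℝ) * ddIter f j n

/-- `E ⊆ ℕ = {1, 2, ...}` has positive upper Banach density. -/
def posUBD (E : Set ℕ) : Prop :=
  ∃ δ : ℝ, 0 < δ ∧ ∃ M N : ℕ → ℕ, (∀ j, 1 ≤ M j ∧ M j ≤ N j) ∧
    Tendsto (fun j => N j - M j) atTop atTop ∧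
    ∀ j, δ * ((N j : ℝ) - (M j : ℝ)) ≤ (Nat.card ↥(E ∩ Set.Icc (M j) (N j)) : ℝ)
/-!
Put `w = ΔW`, `c = 1 / w` (increasing, and `c 0 = 0` since `ΔW 0 = W 0 - W 0`) and `y = x - L`.
Summation by parts gives `∑_{n ≤ N} y n = ∑_{n < N} (c (n+1) - c n) • ∑_{n < k ≤ N} w k • y k`.
Uniform averages bound every tail `‖∑_{n < k ≤ N} w k • y k‖` by `ε ∑_{n < k ≤ N} w k + B`, and the
same summation by parts applied to `w` itself turns this into `‖∑_{n ≤ N} y n‖ ≤ ε N + B c N`.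
Since `c N / N = 1 / (N ΔW N) → 0`, the Cesàro averages of `y` tend to `0`.
-/

theorem dd_zero (g : ℕ → ℝ) : dd g 0 = 0 := by
  simp [dd]

theorem sum_Ioc_dd (g : ℕ → ℝ) {M N : ℕ} (hM : 1 ≤ M) (hMN : M ≤ N) :
    ∑ n ∈ Ioc M N, dd g n = g N - g M := by
  induction N, hMN using Nat.le_induction with
  | base => simp
  | succ N hN ih =>
    rw [sum_Ioc_succ_top hN, ih, dd, if_neg (by omega), Nat.add_sub_cancel]
    ring

theorem sum_Ioc_smul_eq_sum_range_sub_smul {R M : Type*} [Ring R] [AddCommGroup M] [Module R M]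
    (c : ℕ → R) (z : ℕ → M) (hc : c 0 = 0) (N : ℕ) :
    ∑ n ∈ Ioc 0 N, c n • z n = ∑ n ∈ range N, (c (n + 1) - c n) • ∑ k ∈ Ioc n N, z k := by
  induction N with
  | zero => simp
  | succ N ih =>
    have hsplit : ∀ n ∈ range (N + 1), (c (n + 1) - c n) • ∑ k ∈ Ioc n (N + 1), z k =
        (c (n + 1) - c n) • ∑ k ∈ Ioc n N, z k + (c (n + 1) - c n) • z (N + 1) := fun n hn => by
      rw [sum_Ioc_succ_top (Nat.lt_succ_iff.1 (mem_range.1 hn)), smul_add]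
    rw [sum_Ioc_succ_top (Nat.zero_le N), ih, sum_congr rfl hsplit, sum_add_distrib,
      sum_range_succ, ← sum_smul, sum_range_sub c, hc]
    simp

theorem norm_sum_Ioc_smul_le_of_monotone {E : Type*} [SeminormedAddCommGroup E]
    [NormedSpace ℝ E] {c w : ℕ → ℝ} {z : ℕ → E} (hc0 : c 0 = 0) (hc : Monotone c)
    {ε B : ℝ} {N : ℕ} (h : ∀ n < N, ‖∑ k ∈ Ioc n N, z k‖ ≤ ε * ∑ k ∈ Ioc n N, w k + B) :
    ‖∑ n ∈ Ioc 0 N, c n • z n‖ ≤ ε * ∑ n ∈ Ioc 0 N, c n * w n + B * c N := by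
  have hw := sum_Ioc_smul_eq_sum_range_sub_smul c w hc0 N
  simp only [smul_eq_mul] at hw
  rw [sum_Ioc_smul_eq_sum_range_sub_smul c z hc0, hw]
  calc ‖∑ n ∈ range N, (c (n + 1) - c n) • ∑ k ∈ Ioc n N, z k‖
      ≤ ∑ n ∈ range N, (c (n + 1) - c n) * (ε * ∑ k ∈ Ioc n N, w k + B) := by
        refine (norm_sum_le _ _).trans (sum_le_sum fun n hn => ?_)
        have hcn : 0 ≤ c (n + 1) - c n := sub_nonneg.2 (hc n.le_succ)
        rw [norm_smul, Real.norm_of_nonneg hcn]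
        exact mul_le_mul_of_nonneg_left (h n (mem_range.1 hn)) hcn
    _ = ε * ∑ n ∈ range N, (c (n + 1) - c n) * ∑ k ∈ Ioc n N, w k
          + B * ∑ n ∈ range N, (c (n + 1) - c n) := by
        rw [mul_sum, mul_sum, ← sum_add_distrib]
        exact sum_congr rfl fun n _ => by ring
    _ = _ := by rw [sum_range_sub c, hc0, sub_zero]

theorem pos_of_antitoneOn_of_tendsto_mul_atTop {w : ℕ → ℝ} (hw : AntitoneOn w (Set.Ici 1))
    (hlim : Tendsto (fun n : ℕ => (n : ℝ) * w n) atTop atTop) {n : ℕ} (hn : 1 ≤ n) : 0 < w n := by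
  obtain ⟨m, hm⟩ := ((hlim.eventually_gt_atTop 0).and (eventually_ge_atTop n)).exists
  exact (pos_of_mul_pos_right hm.1 m.cast_nonneg).trans_le
    (hw hn (Set.mem_Ici.2 (hn.trans hm.2)) hm.2)

theorem norm_sub_smul_le_of_norm_inv_smul_sub_le {E : Type*} [SeminormedAddCommGroup E]
    [NormedSpace ℝ E] {S L : E} {t ε : ℝ} (ht : 0 < t) (h : ‖t⁻¹ • S - L‖ ≤ ε) :
    ‖S - t • L‖ ≤ ε * t := by
  rw [← one_smul ℝ S, ← mul_inv_cancel₀ ht.ne', mul_smul, ← smul_sub, norm_smul,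
    Real.norm_of_nonneg ht.le, mul_comm]
  exact mul_le_mul_of_nonneg_right h ht.le

theorem exists_norm_sum_Ioc_dd_smul_sub_le {E : Type*} [NormedAddCommGroup E] [NormedSpace ℝ E]
    {W : ℕ → ℝ} {C D : ℝ} (hw : ∀ n, 0 ≤ dd W n) (hwD : ∀ n, dd W n ≤ D)
    {x : ℕ → E} (hx : ∀ n, ‖x n‖ ≤ C) {L : E} (h : unifAvg W x L) {ε : ℝ} (hε : 0 < ε) :
    ∃ B, ∀ n N, n < N →
      ‖∑ k ∈ Ioc n N, dd W k • (x k - L)‖ ≤ ε * ∑ k ∈ Ioc n N, dd W k + B := by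
  obtain ⟨K, hK, hKavg⟩ := h ε hε
  refine ⟨D * ‖L‖ + (C + ‖L‖) * (K + D), fun n N hnN => ?_⟩
  set M := n + 1
  have hD : 0 ≤ D := (hw 0).trans (hwD 0)
  have hC : 0 ≤ C := (norm_nonneg _).trans (hx 0)
  have hIoc : Ioc n N = Icc M N := (Icc_add_one_left_eq_Ioc n N).symm
  have hmass : ∑ k ∈ Ioc n N, dd W k = W N - W M + dd W M := by
    rw [hIoc, ← add_sum_Ioc_eq_sum_Icc hnN, sum_Ioc_dd W (by omega) hnN]
    ring
  have hmass_nonneg : 0 ≤ ε * ∑ k ∈ Ioc n N, dd W k :=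
    mul_nonneg hε.le (sum_nonneg fun k _ => hw k)
  rcases le_or_gt K (W N - W M) with hlarge | hsmall
  · have hpos : 0 < W N - W M := hK.trans_le hlarge
    have hcenter : ‖∑ k ∈ Icc M N, dd W k • x k - (W N - W M) • L‖ ≤ ε * (W N - W M) :=
      norm_sub_smul_le_of_norm_inv_smul_sub_le hpos (hKavg M N (by omega) hnN hlarge).le
    -- `wavgI` sums over `Icc M N` but divides by `W N - W M`, which leaves out `dd W M`.
    have hsplit : ∑ k ∈ Ioc n N, dd W k • (x k - L) =
        (∑ k ∈ Icc M N, dd W k • x k - (W N - W M) • L) - dd W M • L := by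
      rw [← sub_add_eq_sub_sub, ← add_smul, ← hmass, sum_smul, hIoc, ← sum_sub_distrib]
      simp only [smul_sub]
    calc ‖∑ k ∈ Ioc n N, dd W k • (x k - L)‖ ≤ ε * (W N - W M) + D * ‖L‖ := by
          rw [hsplit]
          refine (norm_sub_le _ _).trans (add_le_add hcenter ?_)
          rw [norm_smul, Real.norm_of_nonneg (hw M)]
          exact mul_le_mul_of_nonneg_right (hwD M) (norm_nonneg L)
      _ ≤ _ := by
          have hεw : 0 ≤ ε * dd W M := mul_nonneg hε.le (hw M)
          have hCK : 0 ≤ (C + ‖L‖) * (K + D) := by positivity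
          rw [hmass]
          linarith
  · calc ‖∑ k ∈ Ioc n N, dd W k • (x k - L)‖ ≤ ∑ k ∈ Ioc n N, dd W k * (C + ‖L‖) := by
          refine (norm_sum_le _ _).trans (sum_le_sum fun k _ => ?_)
          rw [norm_smul, Real.norm_of_nonneg (hw k)]
          exact mul_le_mul_of_nonneg_left ((norm_sub_le _ _).trans (by gcongr; exact hx k)) (hw k)
      _ ≤ (K + D) * (C + ‖L‖) := by
          rw [← sum_mul, hmass]
          exact mul_le_mul_of_nonneg_right (by linarith [hwD M]) (by positivity)
      _ ≤ _ := by
          have hDL : 0 ≤ D * ‖L‖ := by positivity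
          linarith

theorem norm_sum_Ioc_le_of_norm_sum_Ioc_smul_le {E : Type*} [SeminormedAddCommGroup E]
    [NormedSpace ℝ E] {w : ℕ → ℝ} (hw0 : w 0 = 0) (hpos : ∀ n, 1 ≤ n → 0 < w n)
    (hanti : AntitoneOn w (Set.Ici 1)) {y : ℕ → E} {ε B : ℝ} {N : ℕ}
    (h : ∀ n < N, ‖∑ k ∈ Ioc n N, w k • y k‖ ≤ ε * ∑ k ∈ Ioc n N, w k + B) :
    ‖∑ n ∈ Ioc 0 N, y n‖ ≤ ε * N + B * (w N)⁻¹ := by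
  have hmono : Monotone fun n => (w n)⁻¹ := by
    refine monotone_nat_of_le_succ fun n => ?_
    rcases Nat.eq_zero_or_pos n with rfl | hn
    · simpa [hw0] using (hpos 1 le_rfl).le
    · exact inv_anti₀ (hpos (n + 1) (by omega))
        (hanti (Set.mem_Ici.2 hn) (Set.mem_Ici.2 (by omega)) n.le_succ)
  have hcancel : ∀ n ∈ Ioc 0 N, (w n)⁻¹ * w n = 1 := fun n hn =>
    inv_mul_cancel₀ (hpos n (mem_Ioc.1 hn).1).ne'
  have hbound := norm_sum_Ioc_smul_le_of_monotone (c := fun n => (w n)⁻¹)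
    (z := fun n => w n • y n) (by simp [hw0]) hmono h
  have hy : ∑ n ∈ Ioc 0 N, ((w n)⁻¹ * w n) • y n = ∑ n ∈ Ioc 0 N, y n :=
    sum_congr rfl fun n hn => by rw [hcancel n hn, one_smul]
  simpa only [smul_smul, hy, sum_congr rfl hcancel, sum_const, Nat.card_Ioc, Nat.sub_zero,
    nsmul_eq_mul, mul_one] using hbound

theorem inv_smul_sum_Icc_one_sub {E : Type*} [AddCommGroup E] [Module ℝ E] (x : ℕ → E) (L : E)
    {N : ℕ} (hN : N ≠ 0) :
    (N : ℝ)⁻¹ • ∑ n ∈ Icc 1 N, x n - L = (N : ℝ)⁻¹ • ∑ n ∈ Ioc 0 N, (x n - L) := by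
  rw [← Icc_add_one_left_eq_Ioc, zero_add, sum_sub_distrib, sum_const, Nat.card_Icc,
    Nat.add_sub_cancel, ← Nat.cast_smul_eq_nsmul ℝ, smul_sub, smul_smul,
    inv_mul_cancel₀ (Nat.cast_ne_zero.2 hN), one_smul]

theorem exists_norm_sum_Ioc_sub_le {E : Type*} [NormedAddCommGroup E] [NormedSpace ℝ E]
    {W : ℕ → ℝ} (hWdec : ∀ m n : ℕ, 1 ≤ m → m ≤ n → dd W n ≤ dd W m)
    (hWN : Tendsto (fun n : ℕ => (n : ℝ) * dd W n) atTop atTop)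
    {x : ℕ → E} {C : ℝ} (hx : ∀ n, ‖x n‖ ≤ C) {L : E} (h : unifAvg W x L) {ε : ℝ} (hε : 0 < ε) :
    ∃ B, ∀ N, ‖∑ n ∈ Ioc 0 N, (x n - L)‖ ≤ ε * N + B * (dd W N)⁻¹ := by
  have hanti : AntitoneOn (dd W) (Set.Ici 1) := fun m hm n _ hmn => hWdec m n hm hmn
  have hpos : ∀ n, 1 ≤ n → 0 < dd W n :=
    fun n hn => pos_of_antitoneOn_of_tendsto_mul_atTop hanti hWN hn
  have hw : ∀ n, 0 ≤ dd W n := fun n =>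
    n.eq_zero_or_pos.elim (fun h0 => h0 ▸ (dd_zero W).ge) fun hn => (hpos n hn).le
  have hwD : ∀ n, dd W n ≤ dd W 1 := fun n =>
    n.eq_zero_or_pos.elim (fun h0 => h0 ▸ dd_zero W ▸ hw 1) fun hn => hWdec 1 n le_rfl hn
  obtain ⟨B, hB⟩ := exists_norm_sum_Ioc_dd_smul_sub_le hw hwD hx h hε
  exact ⟨B, fun N =>
    norm_sum_Ioc_le_of_norm_sum_Ioc_smul_le (dd_zero W) hpos hanti fun n hn => hB n N hn⟩

theorem stmt0_general {Y : Type*} [NormedAddCommGroup Y] [NormedSpace ℝ Y]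
    (W : ℕ → ℝ)
    (hWdec : ∀ m n : ℕ, 1 ≤ m → m ≤ n → dd W n ≤ dd W m)
    (hWN : Tendsto (fun n : ℕ => (n : ℝ) * dd W n) atTop atTop)
    (x : ℕ → Y) (hx : ∃ C : ℝ, ∀ n, ‖x n‖ ≤ C) (L : Y)
    (h : unifAvg W x L) :
    Tendsto (fun N : ℕ => (N : ℝ)⁻¹ • ∑ n ∈ Finset.Icc 1 N, x n) atTop (nhds L) := by
  obtain ⟨C, hC⟩ := hx
  have hrem : Tendsto (fun N : ℕ => ((N : ℝ) * dd W N)⁻¹) atTop (nhds 0) :=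
    tendsto_inv_atTop_zero.comp hWN
  refine Metric.tendsto_atTop.2 fun ε hε => ?_
  obtain ⟨B, hB⟩ := exists_norm_sum_Ioc_sub_le hWdec hWN hC h (half_pos hε)
  obtain ⟨N₀, hN₀⟩ := eventually_atTop.1 (((hrem.const_mul B).eventually
    (gt_mem_nhds (show B * 0 < ε / 2 by simpa using half_pos hε))).and (eventually_ge_atTop 1))
  refine ⟨N₀, fun N hN => ?_⟩
  obtain ⟨hsmall, hN1⟩ := hN₀ N hN
  have hNpos : (0 : ℝ) < N := by exact_mod_cast hN1
  rw [dist_eq_norm, inv_smul_sum_Icc_one_sub x L (by omega), norm_smul,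
    Real.norm_of_nonneg (inv_nonneg.2 hNpos.le)]
  calc (N : ℝ)⁻¹ * ‖∑ n ∈ Ioc 0 N, (x n - L)‖ ≤ (N : ℝ)⁻¹ * (ε / 2 * N + B * (dd W N)⁻¹) :=
        mul_le_mul_of_nonneg_left (hB N) (inv_nonneg.2 hNpos.le)
    _ = ε / 2 + B * ((N : ℝ) * dd W N)⁻¹ := by
        rw [mul_inv]; field_simp
    _ < ε := by linarith

/-- if the uniform `W`-weighted average of a bounded sequence in a Banach
space equals `L`, then the Cesàro averages converge to `L`. -/
theorem stmt0 {Y : Type*} [NormedAddCommGroup Y] [NormedSpace ℝ Y] [CompleteSpace Y]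
    (W : ℕ → ℝ)
    (hWpos : ∀ n : ℕ, 1 ≤ n → 0 < W n)
    (hWmono : ∀ m n : ℕ, 1 ≤ m → m < n → W m < W n)
    (hWtop : Tendsto W atTop atTop)
    (hWdec : ∀ m n : ℕ, 1 ≤ m → m ≤ n → dd W n ≤ dd W m)
    (hW0 : Tendsto (fun n : ℕ => dd W n) atTop (nhds 0))
    (hWN : Tendsto (fun n : ℕ => (n : ℝ) * dd W n) atTop atTop)
    (x : ℕ → Y) (hx : ∃ C : ℝ, ∀ n, ‖x n‖ ≤ C) (L : Y)
    (h : unifAvg W x L) :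
    Tendsto (fun N : ℕ => (N : ℝ)⁻¹ • ∑ n ∈ Finset.Icc 1 N, x n) atTop (nhds L) :=
  stmt0_general W hWdec hWN x hx L h
end

section
/- Let Y be a Banach space and let U : ℕ → (0,∞) be strictly increasing with limsup_{N→∞} Δ log U(N)/Δ log N = ∞ and lim_{N→∞} ΔU(N)/U(N) = 0, and such that ΔU is nondecreasing. Let s : ℕ → ℕ be a nondecreasing function with s(N) ≤ N−1 for all N ∈ ℕ and lim_{N→∞} s(N)·Δ log U(N) = ∞. Then there exists a doubly indexed sequence (c_{N,n})_{N,n∈ℕ} of nonnegative real numbers such that: (i) for each fixed n ∈ ℕ, lim_{N→∞} c_{N,n} = 0; (ii) lim_{N→∞} Σ_{n∈ℕ} c_{N,n} = 1; (iii) limsup_{N→∞} Σ_{n∈ℕ} c_{N,n} < ∞; and (iv) for every bounded sequence (x_n)_{n∈ℕ} in Y, lim_{N→∞} ‖𝔼_{n∈[N−s(N),N]} x_n − Σ_{n=1}^N c_{N,n}·𝔼^U_{k≤n} x_k‖ = 0. -/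
open Filter Finset MeasureTheory

/-! Put `S n = ∑_{k ≤ n} ΔU(k) x_k = U(n) 𝔼^U_{k≤n} x_k`, so that `x_n = (S n - S (n-1)) / ΔU(n)`.
Abel summation writes `∑_{n ∈ [M, N]} x_n` as a combination of the averages `𝔼^U_{k≤n} x_k` with
coefficients `U(n) (1/ΔU(n) - 1/ΔU(n+1))`, nonnegative because `ΔU` is nondecreasing, and
`U(N)/ΔU(N)` at the top, up to the boundary term `S (M-1) / ΔU(M)` of norm at most
`sup ‖x‖ · U(M)/ΔU(M)`. For `M = N - s(N)` and after dividing by `s(N)`, this error vanishes in the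
limit since `s(N) ΔU(M)/U(M) → ∞`, which follows from `s(N) Δlog U(N) → ∞` and
`Δlog U ≤ (1 + o(1)) ΔU/U`. The same estimate for the constant sequence `1` shows that the row
sums tend to `1`. -/

theorem sum_Icc_smul_sub_pred {Y : Type*} [AddCommGroup Y] [Module ℝ Y] (a : ℕ → ℝ)
    (S : ℕ → Y) {M N : ℕ} (h : M ≤ N) :
    ∑ n ∈ Icc M N, a n • (S n - S (n - 1)) =
      ∑ n ∈ Ico M N, (a n - a (n + 1)) • S n + a N • S N - a M • S (M - 1) := by
  induction N, h using Nat.le_induction with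
  | base => simp [smul_sub]
  | succ N hMN ih =>
    rw [sum_Icc_succ_top (by omega), ih, sum_Ico_succ_top hMN]
    simp only [Nat.add_sub_cancel, sub_smul, smul_sub]
    abel

theorem dd_of_two_le (g : ℕ → ℝ) {n : ℕ} (hn : 2 ≤ n) : dd g n = g n - g (n - 1) :=
  if_neg (by omega)

theorem sum_Icc_dd (g : ℕ → ℝ) {m : ℕ} (hm : 1 ≤ m) : ∑ k ∈ Icc 1 m, dd g k = g m := by
  induction m, hm using Nat.le_induction with
  | base => simp [dd]
  | succ n hn ih => rw [sum_Icc_succ_top (by omega), ih, dd_of_two_le g (by omega)]; simp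

noncomputable def wsum {Y : Type*} [AddCommGroup Y] [Module ℝ Y] (W : ℕ → ℝ) (x : ℕ → Y)
    (N : ℕ) : Y :=
  ∑ n ∈ Icc 1 N, dd W n • x n

section WeightedSums

variable {Y : Type*} [AddCommGroup Y] [Module ℝ Y] {W : ℕ → ℝ} {x : ℕ → Y}

theorem wsum_sub_wsum_pred {n : ℕ} (hn : 1 ≤ n) :
    wsum W x n - wsum W x (n - 1) = dd W n • x n := by
  obtain ⟨m, rfl⟩ := Nat.exists_eq_add_of_le' hn
  rw [wsum, sum_Icc_succ_top (by omega)]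
  simp [wsum]

theorem smul_wavg {N : ℕ} (h : W N ≠ 0) : W N • wavg W x N = wsum W x N :=
  smul_inv_smul₀ h _

end WeightedSums

theorem wavg_one {W : ℕ → ℝ} {n : ℕ} (hn : 1 ≤ n) (hW : W n ≠ 0) :
    wavg W (fun _ => (1 : ℝ)) n = 1 := by
  simp only [wavg, smul_eq_mul, mul_one, sum_Icc_dd W hn, inv_mul_cancel₀ hW]

theorem norm_wsum_le {Y : Type*} [SeminormedAddCommGroup Y] [NormedSpace ℝ Y] {W : ℕ → ℝ}
    (hW : ∀ n, 1 ≤ n → 0 ≤ dd W n) {x : ℕ → Y} {C : ℝ} (hx : ∀ n, ‖x n‖ ≤ C) {m N : ℕ}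
    (hN : 1 ≤ N) (hmN : m ≤ N) : ‖wsum W x m‖ ≤ C * W N := by
  have hC : 0 ≤ C := (norm_nonneg _).trans (hx 0)
  calc ‖wsum W x m‖ ≤ ∑ k ∈ Icc 1 m, dd W k * C := by
        refine (norm_sum_le _ _).trans (sum_le_sum fun k hk => ?_)
        have hk : 0 ≤ dd W k := hW k (mem_Icc.1 hk).1
        rw [norm_smul, Real.norm_of_nonneg hk]
        exact mul_le_mul_of_nonneg_left (hx k) hk
    _ ≤ ∑ k ∈ Icc 1 N, dd W k * C :=
        sum_le_sum_of_subset_of_nonneg (Icc_subset_Icc_right hmN)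
          fun k hk _ => mul_nonneg (hW k (mem_Icc.1 hk).1) hC
    _ = C * W N := by rw [← sum_mul, sum_Icc_dd W hN, mul_comm]

theorem cesaroI_one_sub {N s : ℕ} (hs : 1 ≤ s) (hsN : s ≤ N) :
    cesaroI (fun _ => (1 : ℝ)) (N - s) N = 1 + (s : ℝ)⁻¹ := by
  simp only [cesaroI, sum_const, Nat.card_Icc, nsmul_eq_mul, mul_one, Nat.cast_sub hsN,
    sub_sub_cancel, smul_eq_mul]
  rw [show N + 1 - (N - s) = s + 1 by omega]
  push_cast
  rw [mul_add, inv_mul_cancel₀ (by positivity), mul_one]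

noncomputable def abelCoeff (U : ℕ → ℝ) (M N n : ℕ) : ℝ :=
  if 1 ≤ n ∧ M ≤ n ∧ n < N then U n * ((dd U n)⁻¹ - (dd U (n + 1))⁻¹)
  else if 1 ≤ n ∧ n = N then U N / dd U N
  else 0

section AbelCoeff

variable {U : ℕ → ℝ} {M N n : ℕ}

theorem abelCoeff_eq_zero_of_notMem (h : n ∉ Icc 1 N) : abelCoeff U M N n = 0 := by
  rw [mem_Icc] at h
  rw [abelCoeff, if_neg (by omega), if_neg (by omega)]

theorem abelCoeff_nonneg (hU : ∀ n, 1 ≤ n → 0 < U n) (hdd : ∀ n, 1 ≤ n → 0 < dd U n)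
    (hmono : ∀ n, 1 ≤ n → dd U n ≤ dd U (n + 1)) : 0 ≤ abelCoeff U M N n := by
  unfold abelCoeff
  split_ifs with h₁ h₂
  · exact mul_nonneg (hU n h₁.1).le
      (sub_nonneg.2 (inv_anti₀ (hdd n h₁.1) (hmono n h₁.1)))
  · exact div_nonneg (hU N (h₂.2 ▸ h₂.1)).le (hdd N (h₂.2 ▸ h₂.1)).le
  · exact le_rfl

theorem abs_abelCoeff_le (h : n < N) :
    |abelCoeff U M N n| ≤ |U n * ((dd U n)⁻¹ - (dd U (n + 1))⁻¹)| := by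
  unfold abelCoeff
  split_ifs with h₁ h₂
  · exact le_rfl
  · omega
  · rw [abs_zero]
    exact abs_nonneg _

variable {Y : Type*} [AddCommGroup Y] [Module ℝ Y] {x : ℕ → Y}

theorem sum_abelCoeff_smul_wavg (hU : ∀ n, 1 ≤ n → U n ≠ 0) (hM : 1 ≤ M) (hMN : M ≤ N) :
    ∑ n ∈ Icc 1 N, abelCoeff U M N n • wavg U x n =
      ∑ n ∈ Ico M N, ((dd U n)⁻¹ - (dd U (n + 1))⁻¹) • wsum U x n
        + (dd U N)⁻¹ • wsum U x N := by
  rw [← sum_subset (Icc_subset_Icc hM le_rfl) ?_, ← sum_Ico_add_eq_sum_Icc hMN]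
  · congr 1
    · refine sum_congr rfl fun n hn => ?_
      rw [mem_Ico] at hn
      rw [abelCoeff, if_pos ⟨by omega, hn⟩, ← smul_wavg (hU n (by omega)), smul_smul, mul_comm]
    · rw [abelCoeff, if_neg (by omega), if_pos ⟨by omega, rfl⟩, ← smul_wavg (hU N (by omega)),
        smul_smul, div_eq_inv_mul]
  · intro n hn hn'
    rw [mem_Icc] at hn hn'
    rw [abelCoeff, if_neg (by omega), if_neg (by omega), zero_smul]

theorem sum_Icc_sub_sum_abelCoeff_smul_wavg (hU : ∀ n, 1 ≤ n → U n ≠ 0)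
    (hdd : ∀ n, 1 ≤ n → dd U n ≠ 0) (hM : 1 ≤ M) (hMN : M ≤ N) :
    ∑ n ∈ Icc M N, x n - ∑ n ∈ Icc 1 N, abelCoeff U M N n • wavg U x n =
      -((dd U M)⁻¹ • wsum U x (M - 1)) := by
  have hx : ∑ n ∈ Icc M N, x n =
      ∑ n ∈ Icc M N, (dd U n)⁻¹ • (wsum U x n - wsum U x (n - 1)) :=
    sum_congr rfl fun n hn => by
      have hn : 1 ≤ n := hM.trans (mem_Icc.1 hn).1
      rw [wsum_sub_wsum_pred hn, inv_smul_smul₀ (hdd n hn)]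
  rw [hx, sum_Icc_smul_sub_pred _ _ hMN, sum_abelCoeff_smul_wavg hU hM hMN]
  abel

end AbelCoeff

theorem norm_cesaroI_sub_sum_le {U : ℕ → ℝ} (hU : ∀ n, 1 ≤ n → 0 < U n)
    (hdd : ∀ n, 1 ≤ n → 0 < dd U n) {Y : Type*} [SeminormedAddCommGroup Y] [NormedSpace ℝ Y]
    {x : ℕ → Y} {C : ℝ} (hx : ∀ n, ‖x n‖ ≤ C) {N s : ℕ} (hs : s < N) :
    ‖cesaroI x (N - s) N - ∑ n ∈ Icc 1 N, ((s : ℝ)⁻¹ * abelCoeff U (N - s) N n) • wavg U x n‖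
      ≤ C * ((s : ℝ) * (dd U (N - s) / U (N - s)))⁻¹ := by
  set M := N - s
  have hM : 1 ≤ M := by omega
  have hNM : (N : ℝ) - M = s := by simp [M, Nat.cast_sub hs.le]
  have hid : cesaroI x M N - ∑ n ∈ Icc 1 N, ((s : ℝ)⁻¹ * abelCoeff U M N n) • wavg U x n =
      (s : ℝ)⁻¹ • -((dd U M)⁻¹ • wsum U x (M - 1)) := by
    simp_rw [cesaroI, hNM, mul_smul, ← smul_sum, ← smul_sub]
    rw [sum_Icc_sub_sum_abelCoeff_smul_wavg (fun n hn => (hU n hn).ne')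
      (fun n hn => (hdd n hn).ne') hM (by omega)]
  have hwsum : ‖wsum U x (M - 1)‖ ≤ C * U M :=
    norm_wsum_le (fun n hn => (hdd n hn).le) hx hM (by omega)
  rw [hid, norm_smul, norm_neg, norm_smul, norm_inv, norm_inv, Real.norm_natCast,
    Real.norm_of_nonneg (hdd M hM).le]
  calc (s : ℝ)⁻¹ * ((dd U M)⁻¹ * ‖wsum U x (M - 1)‖)
      ≤ (s : ℝ)⁻¹ * ((dd U M)⁻¹ * (C * U M)) := by have := hdd M hM; gcongr
    _ = C * ((s : ℝ) * (dd U M / U M))⁻¹ := by rw [mul_inv, inv_div]; ring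

theorem log_sub_log_mul_div_le {a b : ℝ} (ha : 0 < a) (hb : 0 < b) :
    (Real.log b - Real.log a) * (a / b) ≤ (b - a) / b := by
  rw [← Real.log_div hb.ne' ha.ne']
  calc Real.log (b / a) * (a / b) ≤ (b / a - 1) * (a / b) := by
        gcongr
        exact Real.log_le_sub_one_of_pos (by positivity)
    _ = (b - a) / b := by field_simp

theorem tendsto_mul_dd_div_atTop {U : ℕ → ℝ} (hU : ∀ n, 1 ≤ n → 0 < U n)
    (hU0 : Tendsto (fun N => dd U N / U N) atTop (nhds 0)) {s : ℕ → ℝ} (hs : 0 ≤ s)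
    (hlog : Tendsto (fun N => s N * dd (fun j => Real.log (U j)) N) atTop atTop) :
    Tendsto (fun N => s N * (dd U N / U N)) atTop atTop := by
  have h : Tendsto (fun N => s N * dd (fun j => Real.log (U j)) N * (1 - dd U N / U N))
      atTop atTop :=
    hlog.atTop_mul_pos one_pos (by simpa using tendsto_const_nhds.sub hU0)
  refine tendsto_atTop_mono' _ ?_ h
  filter_upwards [eventually_ge_atTop 2] with N hN
  have hUN := hU N (by omega)
  have hUN' := hU (N - 1) (by omega)
  have h1 : 1 - dd U N / U N = U (N - 1) / U N := by
    rw [dd_of_two_le U hN]; field_simp; ring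
  rw [mul_assoc, h1, dd_of_two_le _ hN, dd_of_two_le _ hN]
  exact mul_le_mul_of_nonneg_left (log_sub_log_mul_div_le hUN' hUN) (hs N)

theorem tendsto_atTop_of_mul_atTop_of_tendsto_zero {α : Type*} {l : Filter α} {a b : α → ℝ}
    (ha : 0 ≤ a) (hab : Tendsto (fun x => a x * b x) l atTop) (hb : Tendsto b l (nhds 0)) :
    Tendsto a l atTop := by
  refine tendsto_atTop_mono' _ ?_ hab
  filter_upwards [hb.eventually (eventually_le_nhds one_pos)] with x hx
  exact mul_le_of_le_one_right (ha x) hx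

-- For large `N - s N` use `s (N - s N) ≤ s N`; the finitely many small values of `N - s N`
-- are handled by a positive lower bound of `f` on them and `s N → ∞`.
theorem tendsto_mul_comp_sub_atTop {f : ℕ → ℝ} (hf : ∀ m, 1 ≤ m → 0 < f m) {s : ℕ → ℕ}
    (hs : Monotone s) (hs1 : ∀ N, 1 ≤ N → s N ≤ N - 1) (hs_top : Tendsto s atTop atTop)
    (hsf : Tendsto (fun m => (s m : ℝ) * f m) atTop atTop) :
    Tendsto (fun N => (s N : ℝ) * f (N - s N)) atTop atTop := by
  rw [tendsto_atTop]
  intro b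
  obtain ⟨m₀, hm₀⟩ := eventually_atTop.1 (hsf.eventually_ge_atTop b)
  obtain ⟨k, hk, hk_min⟩ := (Icc 1 (m₀ + 1)).exists_min_image f ⟨1, by simp⟩
  have hδ : 0 < f k := hf k (mem_Icc.1 hk).1
  filter_upwards [(tendsto_natCast_atTop_atTop.comp hs_top).eventually_ge_atTop (b / f k),
    eventually_ge_atTop 1] with N hsN hN
  have hM : 1 ≤ N - s N := by have := hs1 N hN; omega
  rcases le_or_gt m₀ (N - s N) with hlarge | hsmall
  · calc b ≤ s (N - s N) * f (N - s N) := hm₀ _ hlarge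
      _ ≤ s N * f (N - s N) := by
          have := hf _ hM
          gcongr
          exact hs (Nat.sub_le _ _)
  · calc b ≤ s N * f k := (div_le_iff₀ hδ).1 hsN
      _ ≤ s N * f (N - s N) := by
          gcongr
          exact hk_min _ (mem_Icc.2 ⟨hM, by omega⟩)

noncomputable def cesaroCoeff (U : ℕ → ℝ) (s : ℕ → ℕ) (N n : ℕ) : ℝ :=
  (s N : ℝ)⁻¹ * abelCoeff U (N - s N) N n

section CesaroCoeff

variable {U : ℕ → ℝ} {s : ℕ → ℕ}

theorem cesaroCoeff_eq_zero_of_notMem {N n : ℕ} (h : n ∉ Icc 1 N) : cesaroCoeff U s N n = 0 := by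
  rw [cesaroCoeff, abelCoeff_eq_zero_of_notMem h, mul_zero]

theorem tendsto_cesaroCoeff_zero (hs_top : Tendsto (fun N => (s N : ℝ)) atTop atTop) (n : ℕ) :
    Tendsto (fun N => cesaroCoeff U s N n) atTop (nhds 0) := by
  have hK := hs_top.inv_tendsto_atTop.mul_const |U n * ((dd U n)⁻¹ - (dd U (n + 1))⁻¹)|
  rw [zero_mul] at hK
  refine squeeze_zero_norm' ?_ hK
  filter_upwards [eventually_gt_atTop n] with N hN
  rw [cesaroCoeff, norm_mul, norm_inv, Real.norm_natCast]
  exact mul_le_mul_of_nonneg_left (abs_abelCoeff_le hN) (by positivity)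

theorem cesaroCoeff_nonneg (hU : ∀ n, 1 ≤ n → 0 < U n) (hdd : ∀ n, 1 ≤ n → 0 < dd U n)
    (hmono : ∀ n, 1 ≤ n → dd U n ≤ dd U (n + 1)) (N n : ℕ) : 0 ≤ cesaroCoeff U s N n :=
  mul_nonneg (by positivity) (abelCoeff_nonneg hU hdd hmono)

variable (hU : ∀ n, 1 ≤ n → 0 < U n) (hdd : ∀ n, 1 ≤ n → 0 < dd U n)
  (hs1 : ∀ N, 1 ≤ N → s N ≤ N - 1)
  (hq : Tendsto (fun N => ((s N : ℝ) * (dd U (N - s N) / U (N - s N)))⁻¹) atTop (nhds 0))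
include hU hdd hs1 hq

theorem tendsto_norm_cesaroI_sub_sum_cesaroCoeff {Y : Type*} [SeminormedAddCommGroup Y]
    [NormedSpace ℝ Y] {x : ℕ → Y} {C : ℝ} (hx : ∀ n, ‖x n‖ ≤ C) :
    Tendsto (fun N => ‖cesaroI x (N - s N) N - ∑ n ∈ Icc 1 N, cesaroCoeff U s N n • wavg U x n‖)
      atTop (nhds 0) := by
  refine squeeze_zero' (Eventually.of_forall fun _ => norm_nonneg _) ?_
    (by simpa only [mul_zero] using hq.const_mul C)
  filter_upwards [eventually_ge_atTop 1] with N hN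
  exact norm_cesaroI_sub_sum_le (N := N) (s := s N) hU hdd hx (by have := hs1 N hN; omega)

theorem tendsto_sum_cesaroCoeff (hs_top : Tendsto (fun N => (s N : ℝ)) atTop atTop) :
    Tendsto (fun N => ∑ n ∈ Icc 1 N, cesaroCoeff U s N n) atTop (nhds 1) := by
  have hces : Tendsto (fun N => cesaroI (fun _ => (1 : ℝ)) (N - s N) N) atTop (nhds 1) := by
    refine (by simpa using tendsto_const_nhds.add hs_top.inv_tendsto_atTop :
      Tendsto (fun N => 1 + (s N : ℝ)⁻¹) atTop (nhds 1)).congr' ?_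
    filter_upwards [hs_top.eventually_ge_atTop 1, eventually_ge_atTop 1] with N hsN hN
    exact (cesaroI_one_sub (by exact_mod_cast hsN) (by have := hs1 N hN; omega)).symm
  refine hces.congr_dist ((tendsto_norm_cesaroI_sub_sum_cesaroCoeff hU hdd hs1 hq
    (x := fun _ => (1 : ℝ)) (C := 1) fun _ => by simp).congr fun N => ?_)
  rw [dist_eq_norm]
  congr 2
  refine sum_congr rfl fun n hn => ?_
  have hn : 1 ≤ n := (mem_Icc.1 hn).1
  rw [wavg_one hn (hU n hn).ne', smul_eq_mul, mul_one]

end CesaroCoeff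

theorem stmt4_general (U : ℕ → ℝ)
    (hUpos : ∀ n : ℕ, 1 ≤ n → 0 < U n)
    (hU0 : Tendsto (fun N : ℕ => dd U N / U N) atTop (nhds 0))
    (hUdd : ∀ m n : ℕ, 1 ≤ m → m ≤ n → dd U m ≤ dd U n)
    (s : ℕ → ℕ) (hs : Monotone s) (hs1 : ∀ N : ℕ, 1 ≤ N → s N ≤ N - 1)
    (hstop : Tendsto (fun N : ℕ => (s N : ℝ) * dd (fun j => Real.log (U j)) N) atTop atTop) :
    ∃ c : ℕ → ℕ → ℝ,
      (∀ N n, 0 ≤ c N n) ∧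
      (∀ N, c N 0 = 0) ∧
      (∀ N, Summable (c N)) ∧
      (∀ n, Tendsto (fun N => c N n) atTop (nhds 0)) ∧
      Tendsto (fun N => ∑' n, c N n) atTop (nhds 1) ∧
      (∃ B : ℝ, ∀ᶠ N in atTop, (∑' n, c N n) ≤ B) ∧
      ∀ (Y : Type*) [NormedAddCommGroup Y] [NormedSpace ℝ Y] [CompleteSpace Y],
        ∀ x : ℕ → Y, (∃ C : ℝ, ∀ n, ‖x n‖ ≤ C) →
          Tendsto (fun N : ℕ =>
            ‖cesaroI x (N - s N) N - ∑ n ∈ Finset.Icc 1 N, c N n • wavg U x n‖)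
            atTop (nhds 0) := by
  have hdd : ∀ n, 1 ≤ n → 0 < dd U n := fun n hn =>
    (show 0 < dd U 1 by simpa [dd] using hUpos 1 le_rfl).trans_le (hUdd 1 n le_rfl hn)
  have hsf := tendsto_mul_dd_div_atTop hUpos hU0 (fun N => Nat.cast_nonneg (s N)) hstop
  have hs_top := tendsto_atTop_of_mul_atTop_of_tendsto_zero (fun N => Nat.cast_nonneg (s N)) hsf hU0
  have hq := (tendsto_mul_comp_sub_atTop (fun m hm => div_pos (hdd m hm) (hUpos m hm)) hs hs1
    (tendsto_natCast_atTop_iff.1 hs_top) hsf).inv_tendsto_atTop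
  have hrow : Tendsto (fun N => ∑' n, cesaroCoeff U s N n) atTop (nhds 1) :=
    (tendsto_sum_cesaroCoeff hUpos hdd hs1 hq hs_top).congr fun N =>
      (tsum_eq_sum fun n => cesaroCoeff_eq_zero_of_notMem).symm
  refine ⟨cesaroCoeff U s, cesaroCoeff_nonneg hUpos hdd fun n hn => hUdd n (n + 1) hn (by omega),
    fun N => cesaroCoeff_eq_zero_of_notMem (by simp),
    fun N => summable_of_ne_finset_zero fun n => cesaroCoeff_eq_zero_of_notMem,
    tendsto_cesaroCoeff_zero hs_top, hrow, ⟨2, hrow.eventually (eventually_le_nhds one_lt_two)⟩,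
    fun Y _ _ _ x ⟨C, hC⟩ => tendsto_norm_cesaroI_sub_sum_cesaroCoeff hUpos hdd hs1 hq hC⟩

/-- existence of a Silverman–Toeplitz matrix relating the interval Cesàro
averages `𝔼_{n∈[N−s(N),N]} x_n` to the weighted averages `𝔼^U_{k≤n} x_k`. -/
theorem stmt4 (U : ℕ → ℝ)
    (hUpos : ∀ n : ℕ, 1 ≤ n → 0 < U n)
    (hUmono : ∀ m n : ℕ, 1 ≤ m → m < n → U m < U n)
    (hUfast : ∀ B : ℝ, ∃ᶠ N : ℕ in atTop,
      B ≤ dd (fun j => Real.log (U j)) N / dd (fun j : ℕ => Real.log (j : ℝ)) N)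
    (hU0 : Tendsto (fun N : ℕ => dd U N / U N) atTop (nhds 0))
    (hUdd : ∀ m n : ℕ, 1 ≤ m → m ≤ n → dd U m ≤ dd U n)
    (s : ℕ → ℕ) (hs : Monotone s) (hs1 : ∀ N : ℕ, 1 ≤ N → s N ≤ N - 1)
    (hstop : Tendsto (fun N : ℕ => (s N : ℝ) * dd (fun j => Real.log (U j)) N) atTop atTop) :
    ∃ c : ℕ → ℕ → ℝ,
      (∀ N n, 0 ≤ c N n) ∧
      (∀ N, c N 0 = 0) ∧
      (∀ N, Summable (c N)) ∧
      (∀ n, Tendsto (fun N => c N n) atTop (nhds 0)) ∧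
      Tendsto (fun N => ∑' n, c N n) atTop (nhds 1) ∧
      (∃ B : ℝ, ∀ᶠ N in atTop, (∑' n, c N n) ≤ B) ∧
      ∀ (Y : Type*) [NormedAddCommGroup Y] [NormedSpace ℝ Y] [CompleteSpace Y],
        ∀ x : ℕ → Y, (∃ C : ℝ, ∀ n, ‖x n‖ ≤ C) →
          Tendsto (fun N : ℕ =>
            ‖cesaroI x (N - s N) N - ∑ n ∈ Finset.Icc 1 N, c N n • wavg U x n‖)
            atTop (nhds 0) :=
  stmt4_general U hUpos hU0 hUdd s hs hs1 hstop
end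

section
/- Let x_n = e^{2πi·log n} ∈ ℂ for n ∈ ℕ, and let C = 1/(1+2πi). Then for each k ∈ ℕ the k-fold iterated Cesàro averages satisfy 𝔼(k)_{n≤N} x_n = C^k·e^{2πi·log N} + o_{N→∞}(1), and consequently 𝔼(∞) x_n = 0 (iterated averages taken with respect to W(N) = N). -/
open Filter Finset MeasureTheory

/-!
Write `x n = n ^ s` with `s = 2πi`. The antiderivative `y ^ (s + 1) / (s + 1)` of `y ^ s` has
increments over `[n, n + 1]` within `O(1 / n)` of `(n + 1) ^ s` (mean value inequality, twice), so
telescoping gives `𝔼_{n ≤ N} n ^ s = C N ^ s + o(1)` with `C = 1 / (1 + s)`. By linearity, the error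
of the `(k + 1)`-fold average is the Cesàro mean of the error of the `k`-fold one plus `C ^ k` times
the first-level error, hence `𝔼(k) x_n = C ^ k x_N + o(1)` for all `k`. As `|x_n| = 1` and
`|C| < 1`, the `limsup` of `|𝔼(k) x_n|` is at most `|C| ^ k → 0`.
-/

open Complex

namespace Complex

lemma norm_ofReal_cpow_sub_le {s : ℂ} (hs : s.re = 0) {t u : ℝ} (ht : 0 < t) (htu : t ≤ u) :
    ‖(u : ℂ) ^ s - (t : ℂ) ^ s‖ ≤ ‖s‖ / t * (u - t) := by
  rcases eq_or_ne s 0 with rfl | hs0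
  · simp
  have hderiv : ∀ y ∈ Set.Icc t u,
      HasDerivWithinAt (fun y : ℝ => (y : ℂ) ^ s) (s * (y : ℂ) ^ (s - 1)) (Set.Icc t u) y :=
    fun y hy => (hasDerivAt_ofReal_cpow_const (ht.trans_le hy.1).ne' hs0).hasDerivWithinAt
  refine norm_image_sub_le_of_norm_deriv_le_segment' hderiv (fun y ⟨hty, _⟩ => ?_) u
    ⟨htu, le_rfl⟩
  have hy : 0 < y := ht.trans_le hty
  calc ‖s * (y : ℂ) ^ (s - 1)‖ = ‖s‖ / y := by
        rw [norm_mul, norm_cpow_eq_rpow_re_of_pos hy, sub_re, hs, one_re, zero_sub,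
          Real.rpow_neg_one, div_eq_mul_inv]
    _ ≤ ‖s‖ / t := by gcongr

lemma norm_cpow_antideriv_sub_sub_le {s : ℂ} (hs : s.re = 0) {a b : ℝ} (ha : 0 < a)
    (hab : a ≤ b) :
    ‖(b : ℂ) ^ (s + 1) / (s + 1) - (a : ℂ) ^ (s + 1) / (s + 1) - (b - a) * (b : ℂ) ^ s‖
      ≤ ‖s‖ / a * (b - a) ^ 2 := by
  have hs1 : s ≠ -1 := fun h => by simp [h] at hs
  set ψ : ℝ → ℂ := fun y => (y : ℂ) ^ (s + 1) / (s + 1) - y * (b : ℂ) ^ s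
  have hderiv : ∀ y ∈ Set.Icc a b,
      HasDerivWithinAt ψ ((y : ℂ) ^ s - (b : ℂ) ^ s) (Set.Icc a b) y := fun y hy =>
    ((hasDerivAt_ofReal_cpow_const' (ha.trans_le hy.1).ne' hs1).sub
      ((hasDerivAt_id y).ofReal_comp.mul_const _)).hasDerivWithinAt.congr_deriv (by simp)
  have hbound : ∀ y ∈ Set.Ico a b, ‖(y : ℂ) ^ s - (b : ℂ) ^ s‖ ≤ ‖s‖ / a * (b - a) := by
    rintro y ⟨hay, hyb⟩
    rw [norm_sub_rev]
    calc ‖(b : ℂ) ^ s - (y : ℂ) ^ s‖ ≤ ‖s‖ / y * (b - y) :=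
          norm_ofReal_cpow_sub_le hs (ha.trans_le hay) hyb.le
      _ ≤ ‖s‖ / a * (b - a) := by gcongr
  convert norm_image_sub_le_of_norm_deriv_le_segment' hderiv hbound b ⟨hab, le_rfl⟩ using 1
  · simp only [ψ]
    ring_nf
  · ring

lemma tendsto_natCast_succ_cpow_sub_antideriv_sub {s : ℂ} (hs : s.re = 0) :
    Tendsto (fun n : ℕ => ((n + 1 : ℕ) : ℂ) ^ s
      - (((n + 1 : ℕ) : ℂ) ^ (s + 1) / (s + 1) - (n : ℂ) ^ (s + 1) / (s + 1)))
      atTop (nhds 0) := by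
  rw [tendsto_zero_iff_norm_tendsto_zero]
  refine squeeze_zero' (Eventually.of_forall fun n => norm_nonneg _) ?_
    ((tendsto_const_nhds (x := ‖s‖)).div_atTop tendsto_natCast_atTop_atTop)
  filter_upwards [eventually_gt_atTop 0] with n hn
  rw [norm_sub_rev]
  simpa [sub_sub] using
    norm_cpow_antideriv_sub_sub_le hs (a := n) (b := n + 1) (by positivity) (by linarith)

lemma tendsto_cesaro_natCast_cpow_sub {s : ℂ} (hs : s.re = 0) :
    Tendsto (fun N : ℕ => (N : ℝ)⁻¹ • ∑ n ∈ Icc 1 N, (n : ℂ) ^ s - (s + 1)⁻¹ * (N : ℂ) ^ s)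
      atTop (nhds 0) := by
  have hs1 : s + 1 ≠ 0 := fun h => by simpa [hs] using congrArg re h
  refine (tendsto_natCast_succ_cpow_sub_antideriv_sub hs).cesaro_smul.congr' ?_
  filter_upwards [eventually_gt_atTop 0] with N hN
  have hN' : (N : ℂ) ≠ 0 := by exact_mod_cast hN.ne'
  rw [sum_sub_distrib, sum_range_sub (fun n : ℕ => (n : ℂ) ^ (s + 1) / (s + 1)),
    ← Ico_add_one_right_eq_Icc, sum_Ico_eq_sum_range]
  simp only [Nat.cast_zero, zero_cpow hs1, zero_div, sub_zero, smul_sub, add_comm 1]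
  congr 1
  rw [cpow_add _ _ hN', cpow_one, real_smul, ofReal_inv, ofReal_natCast]
  field_simp

lemma norm_inv_one_add_lt_one {s : ℂ} (hs : s.re = 0) (hs0 : s ≠ 0) : ‖(1 + s)⁻¹‖ < 1 := by
  have him : s.im ≠ 0 := fun h => hs0 (ext hs h)
  have hsq : 1 < ‖1 + s‖ ^ 2 := by
    rw [Complex.sq_norm, normSq_apply]
    simp only [add_re, one_re, hs, add_im, one_im]
    nlinarith [sq_pos_of_ne_zero him]
  rw [norm_inv]
  exact inv_lt_one_of_one_lt₀ (by nlinarith [norm_nonneg (1 + s)])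

lemma exp_mul_log_natCast {n : ℕ} (hn : n ≠ 0) (s : ℂ) :
    exp (s * (Real.log n : ℂ)) = (n : ℂ) ^ s := by
  rw [cpow_def_of_ne_zero (by exact_mod_cast hn), ofReal_log n.cast_nonneg, ofReal_natCast,
    mul_comm]

end Complex

lemma Filter.Tendsto.cesaro_smul_Icc {E : Type*} [NormedAddCommGroup E] [NormedSpace ℝ E]
    {u : ℕ → E} {l : E} (h : Tendsto u atTop (nhds l)) :
    Tendsto (fun N : ℕ => (N : ℝ)⁻¹ • ∑ n ∈ Icc 1 N, u n) atTop (nhds l) := by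
  refine (h.comp (tendsto_add_atTop_nat 1)).cesaro_smul.congr fun N => ?_
  rw [← Ico_add_one_right_eq_Icc, sum_Ico_eq_sum_range]
  simp [add_comm]

lemma dd_natCast {n : ℕ} (hn : 1 ≤ n) : dd (fun m : ℕ => (m : ℝ)) n = 1 := by
  rw [dd]
  split_ifs
  · simp
  · simp [Nat.cast_sub hn]

lemma iterAvg_natCast_succ {Y : Type*} [AddCommGroup Y] [Module ℝ Y] (x : ℕ → Y) (k N : ℕ) :
    iterAvg (fun n : ℕ => (n : ℝ)) x (k + 1) N
      = (N : ℝ)⁻¹ • ∑ n ∈ Icc 1 N, iterAvg (fun n : ℕ => (n : ℝ)) x k n := by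
  rw [iterAvg]
  congr 1
  refine sum_congr rfl fun n hn => ?_
  rw [dd_natCast (mem_Icc.1 hn).1, one_smul]

lemma tendsto_iterAvg_natCast_sub_pow_mul {x : ℕ → ℂ} {C : ℂ}
    (h : Tendsto (fun N : ℕ => (N : ℝ)⁻¹ • ∑ n ∈ Icc 1 N, x n - C * x N) atTop (nhds 0))
    (k : ℕ) :
    Tendsto (fun N : ℕ => iterAvg (fun n : ℕ => (n : ℝ)) x (k + 1) N - C ^ (k + 1) * x N)
      atTop (nhds 0) := by
  induction k with
  | zero => simpa only [iterAvg_natCast_succ, iterAvg.eq_1, zero_add, pow_one] using h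
  | succ k ih =>
    have hsplit : ∀ N : ℕ,
        iterAvg (fun n : ℕ => (n : ℝ)) x (k + 2) N - C ^ (k + 2) * x N
          = (N : ℝ)⁻¹ • ∑ n ∈ Icc 1 N,
              (iterAvg (fun n : ℕ => (n : ℝ)) x (k + 1) n - C ^ (k + 1) * x n)
            + C ^ (k + 1) * ((N : ℝ)⁻¹ • ∑ n ∈ Icc 1 N, x n - C * x N) := by
      intro N
      rw [iterAvg_natCast_succ, sum_sub_distrib, ← mul_sum]
      simp only [smul_sub, real_smul]
      ring
    simpa only [hsplit, mul_zero, add_zero] using ih.cesaro_smul_Icc.add (h.const_mul _)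

lemma limsup_norm_mem_Icc_of_tendsto_sub {u v : ℕ → ℂ} {b : ℝ}
    (h : Tendsto (fun n => u n - v n) atTop (nhds 0)) (hv : ∀ n, ‖v n‖ ≤ b) :
    limsup (fun n => ‖u n‖) atTop ∈ Set.Icc 0 b := by
  have hle : ∀ n, ‖u n‖ ≤ ‖u n - v n‖ + b := fun n =>
    (norm_le_norm_sub_add (u n) (v n)).trans (by gcongr; exact hv n)
  have hlim : Tendsto (fun n => ‖u n - v n‖ + b) atTop (nhds b) := by
    simpa using (tendsto_zero_iff_norm_tendsto_zero.mp h).add_const b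
  have hbdd : IsBoundedUnder (· ≤ ·) atTop (fun n => ‖u n‖) :=
    hlim.isBoundedUnder_le.mono_le (Eventually.of_forall hle)
  refine ⟨le_limsup_of_frequently_le (Frequently.of_forall fun n => norm_nonneg _) hbdd, ?_⟩
  calc limsup (fun n => ‖u n‖) atTop ≤ limsup (fun n => ‖u n - v n‖ + b) atTop :=
        limsup_le_limsup (Eventually.of_forall hle)
          (isCoboundedUnder_le_of_le atTop fun n => norm_nonneg _) hlim.isBoundedUnder_le
    _ = b := hlim.limsup_eq

lemma iterInfty_natCast_zero {x : ℕ → ℂ} {C : ℂ} (hC : ‖C‖ < 1) (hx : ∀ n, ‖x n‖ ≤ 1)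
    (h : ∀ k : ℕ, Tendsto (fun N : ℕ => iterAvg (fun n : ℕ => (n : ℝ)) x (k + 1) N
      - C ^ (k + 1) * x N) atTop (nhds 0)) :
    iterInfty (fun n : ℕ => (n : ℝ)) x 0 := by
  have hbounds : ∀ k : ℕ, limsup (fun N => ‖iterAvg (fun n : ℕ => (n : ℝ)) x (k + 1) N‖) atTop
      ∈ Set.Icc 0 (‖C‖ ^ (k + 1)) :=
    fun k => limsup_norm_mem_Icc_of_tendsto_sub (h k) fun n => by
      simpa [norm_mul, norm_pow] using mul_le_mul_of_nonneg_left (hx n) (by positivity)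
  have hgeom : Tendsto (fun k : ℕ => ‖C‖ ^ (k + 1)) atTop (nhds 0) :=
    (tendsto_pow_atTop_nhds_zero_of_lt_one (norm_nonneg _) hC).comp (tendsto_add_atTop_nat 1)
  simp only [iterInfty, sub_zero]
  exact tendsto_of_tendsto_of_tendsto_of_le_of_le tendsto_const_nhds hgeom
    (fun k => (hbounds k).1) fun k => (hbounds k).2

/-- for `x_n = e^{2πi·log n}` and `C = 1/(1+2πi)`, the iterated Cesàro
averages satisfy `𝔼(k)_{n≤N} x_n = C^k·e^{2πi·log N} + o(1)`, and `𝔼(∞) x_n = 0`. -/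
theorem stmt17 :
    (∀ k : ℕ, 1 ≤ k →
      Tendsto (fun N : ℕ =>
          ‖iterAvg (fun n : ℕ => (n : ℝ))
              (fun n : ℕ => Complex.exp (2 * (Real.pi : ℂ) * Complex.I * (Real.log n : ℂ)))
              k N
            - (1 + 2 * (Real.pi : ℂ) * Complex.I)⁻¹ ^ k
              * Complex.exp (2 * (Real.pi : ℂ) * Complex.I * (Real.log N : ℂ))‖)
        atTop (nhds 0)) ∧
    iterInfty (fun n : ℕ => (n : ℝ))
      (fun n : ℕ => Complex.exp (2 * (Real.pi : ℂ) * Complex.I * (Real.log n : ℂ))) 0 := by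
  set s : ℂ := 2 * (Real.pi : ℂ) * I
  have hs : s.re = 0 := by simp [s]
  have hcesaro : Tendsto (fun N : ℕ => (N : ℝ)⁻¹ • ∑ n ∈ Icc 1 N, exp (s * (Real.log n : ℂ))
      - (1 + s)⁻¹ * exp (s * (Real.log N : ℂ))) atTop (nhds 0) := by
    refine (tendsto_cesaro_natCast_cpow_sub hs).congr' ?_
    filter_upwards [eventually_ne_atTop 0] with N hN
    rw [add_comm 1 s, exp_mul_log_natCast hN,
      sum_congr rfl fun n hn => exp_mul_log_natCast (Nat.one_le_iff_ne_zero.mp (mem_Icc.1 hn).1) s]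
  have hiter := tendsto_iterAvg_natCast_sub_pow_mul hcesaro
  have hs0 : s ≠ 0 := by simp [s, Real.pi_ne_zero]
  have hnorm : ∀ n : ℕ, ‖exp (s * (Real.log n : ℂ))‖ ≤ 1 := fun n => by
    rw [norm_exp, re_mul_ofReal, hs, zero_mul, Real.exp_zero]
  refine ⟨fun k hk => ?_, iterInfty_natCast_zero (norm_inv_one_add_lt_one hs hs0) hnorm hiter⟩
  obtain ⟨k, rfl⟩ := Nat.exists_eq_add_of_le' hk
  exact tendsto_zero_iff_norm_tendsto_zero.mp (hiter k)
end
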